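/- Let f : A → B be a homomorphism of commutative rings and J an ideal of B. Set A' := A⋈^f J and J' := {0} × J = {(0, j) : j ∈ J}, which is an ideal of A'. Then the simple amalgamation A'⋈J' := {(x, x + j') : x ∈ A', j' ∈ J'} (a subring of A' × A') is isomorphic as a ring to A⋈^{f⁽²⁾}(J × J) = {(a, (f(a)+j₁, f(a)+j₂)) : a ∈ A, j₁, j₂ ∈ J}, where f⁽²⁾ : A → B × B is the diagonal homomorphism a ↦ (f(a), f(a)); an isomorphism is given by ((a, f(a)+j₁), (a, f(a)+j₁) + (0, j₂)) ↦ (a, (f(a)+j₁, f(a)+j₁+j₂)). -/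

import Mathlib

/-- The amalgamation `A ⋈^f J = {(a, f a + j) | a ∈ A, j ∈ J}` of `A` with `B`
along the ideal `J` of `B`, with respect to the ring homomorphism `f : A → B`,
as a subring of the product ring `A × B`. -/
def amalgamation {A B : Type*} [CommRing A] [CommRing B] (f : A →+* B) (J : Ideal B) :
    Subring (A × B) where
  carrier := {x : A × B | ∃ a : A, ∃ j ∈ J, x = (a, f a + j)}
  one_mem' := ⟨1, 0, J.zero_mem, by simp; rfl⟩
  zero_mem' := ⟨0, 0, J.zero_mem, by simp; rfl⟩
  mul_mem' := by
    rintro x y ⟨a, j, hj, rfl⟩ ⟨c, k, hk, rfl⟩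
    refine ⟨a * c, f a * k + j * f c + j * k,
      J.add_mem (J.add_mem (J.mul_mem_left _ hk) (J.mul_mem_right _ hj)) (J.mul_mem_right _ hj),
      ?_⟩
    simp only [Prod.mk_mul_mk, map_mul, Prod.mk.injEq]
    exact ⟨trivial, by ring⟩
  add_mem' := by
    rintro x y ⟨a, j, hj, rfl⟩ ⟨c, k, hk, rfl⟩
    refine ⟨a + c, j + k, J.add_mem hj hk, ?_⟩
    simp only [Prod.mk_add_mk, map_add, Prod.mk.injEq]
    exact ⟨trivial, by ring⟩
  neg_mem' := by
    rintro x ⟨a, j, hj, rfl⟩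
    refine ⟨-a, -j, J.neg_mem hj, ?_⟩
    simp only [Prod.neg_mk, map_neg, Prod.mk.injEq]
    exact ⟨trivial, by ring⟩

/-- The ideal `J' = {0} × J = {(0, j) | j ∈ J}` of the amalgamation `A ⋈^f J`. -/
def zeroTimesJ {A B : Type*} [CommRing A] [CommRing B] (f : A →+* B) (J : Ideal B) :
    Ideal ↥(amalgamation f J) where
  carrier := {x : ↥(amalgamation f J) | ∃ j ∈ J, (x : A × B) = (0, j)}
  zero_mem' := ⟨0, J.zero_mem, by simp; rfl⟩
  add_mem' := by
    rintro x y ⟨j, hj, hx⟩ ⟨k, hk, hy⟩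
    refine ⟨j + k, J.add_mem hj hk, ?_⟩
    show ((x : A × B) + (y : A × B)) = ((0 : A), j + k)
    rw [hx, hy, Prod.mk_add_mk, add_zero]
  smul_mem' := by
    rintro c x ⟨j, hj, hx⟩
    refine ⟨(c : A × B).2 * j, J.mul_mem_left _ hj, ?_⟩
    show ((c : A × B) * (x : A × B)) = ((0 : A), (c : A × B).2 * j)
    rw [hx, Prod.ext_iff]
    exact ⟨mul_zero _, rfl⟩

/-!
An element of `A' ⋈ J'` is a pair `(x, y)` of elements of `A'` whose difference lies in
`J' = {0} × J`, i.e. whose first coordinates agree. Such a pair is therefore determined by the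
triple `(a, b₁, b₂)` of the common first coordinate and the two second coordinates, and these
triples are exactly those with `b₁ - f a, b₂ - f a ∈ J`. Since all ring operations are
componentwise, forgetting the duplicated coordinate is a ring isomorphism.
-/

section Amalgamation

variable {A B : Type*} [CommRing A] [CommRing B]

theorem mem_amalgamation_iff (f : A →+* B) (J : Ideal B) {x : A × B} :
    x ∈ amalgamation f J ↔ x.2 - f x.1 ∈ J := by
  constructor
  · rintro ⟨a, j, hj, rfl⟩
    simpa using hj
  · intro hx
    exact ⟨x.1, x.2 - f x.1, hx, by simp⟩

theorem mem_amalgamation_id_iff (I : Ideal A) {x : A × A} :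
    x ∈ amalgamation (RingHom.id A) I ↔ x.2 - x.1 ∈ I :=
  mem_amalgamation_iff (RingHom.id A) I

theorem mem_amalgamation_prod_iff {C : Type*} [CommRing C] (f : A →+* B) (g : A →+* C)
    (J : Ideal B) (K : Ideal C) {x : A × (B × C)} :
    x ∈ amalgamation (f.prod g) (J.prod K) ↔ x.2.1 - f x.1 ∈ J ∧ x.2.2 - g x.1 ∈ K := by
  rw [mem_amalgamation_iff, Ideal.mem_prod]
  rfl

theorem mem_zeroTimesJ_iff (f : A →+* B) (J : Ideal B) {x : amalgamation f J} :
    x ∈ zeroTimesJ f J ↔ (x : A × B).1 = 0 := by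
  constructor
  · rintro ⟨j, -, hx⟩
    simp [hx]
  · intro hx
    have hJ := (mem_amalgamation_iff f J).1 x.2
    rw [hx, map_zero, sub_zero] at hJ
    exact ⟨_, hJ, Prod.ext hx rfl⟩

variable (f : A →+* B) (J : Ideal B)

theorem fst_fst_eq_of_mem_amalgamation_zeroTimesJ {z : amalgamation f J × amalgamation f J}
    (hz : z ∈ amalgamation (RingHom.id _) (zeroTimesJ f J)) :
    (z.2 : A × B).1 = (z.1 : A × B).1 := by
  rw [mem_amalgamation_id_iff, mem_zeroTimesJ_iff] at hz
  exact sub_eq_zero.1 hz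

def simpleAmalgamationToProd :
    amalgamation (RingHom.id (amalgamation f J)) (zeroTimesJ f J) →+* A × (B × B) where
  toFun z := (z.val.1.val.1, (z.val.1.val.2, z.val.2.val.2))
  map_one' := rfl
  map_mul' _ _ := rfl
  map_zero' := rfl
  map_add' _ _ := rfl

theorem simpleAmalgamationToProd_mem (z) :
    simpleAmalgamationToProd f J z ∈ amalgamation (f.prod f) (J.prod J) := by
  have h₁ := (mem_amalgamation_iff f J).1 z.val.1.2
  have h₂ := (mem_amalgamation_iff f J).1 z.val.2.2
  rw [fst_fst_eq_of_mem_amalgamation_zeroTimesJ f J z.2] at h₂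
  exact (mem_amalgamation_prod_iff f f J J).2 ⟨h₁, h₂⟩

theorem simpleAmalgamationToProd_injective :
    Function.Injective (simpleAmalgamationToProd f J) := by
  intro z w h
  simp only [simpleAmalgamationToProd, RingHom.coe_mk, MonoidHom.coe_mk, OneHom.coe_mk,
    Prod.mk.injEq] at h
  obtain ⟨h₁, h₂, h₃⟩ := h
  ext
  · exact h₁
  · exact h₂
  · rw [fst_fst_eq_of_mem_amalgamation_zeroTimesJ f J z.2,
      fst_fst_eq_of_mem_amalgamation_zeroTimesJ f J w.2, h₁]
  · exact h₃

theorem exists_simpleAmalgamationToProd_eq {w : A × (B × B)}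
    (hw : w ∈ amalgamation (f.prod f) (J.prod J)) :
    ∃ z, simpleAmalgamationToProd f J z = w := by
  obtain ⟨h₁, h₂⟩ := (mem_amalgamation_prod_iff f f J J).1 hw
  let x₁ : amalgamation f J := ⟨(w.1, w.2.1), (mem_amalgamation_iff f J).2 h₁⟩
  let x₂ : amalgamation f J := ⟨(w.1, w.2.2), (mem_amalgamation_iff f J).2 h₂⟩
  have hx : (x₁, x₂) ∈ amalgamation (RingHom.id _) (zeroTimesJ f J) := by
    rw [mem_amalgamation_id_iff, mem_zeroTimesJ_iff]
    exact sub_self w.1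
  exact ⟨⟨(x₁, x₂), hx⟩, rfl⟩

noncomputable def simpleAmalgamationEquiv :
    amalgamation (RingHom.id (amalgamation f J)) (zeroTimesJ f J) ≃+*
      amalgamation (f.prod f) (J.prod J) :=
  RingEquiv.ofBijective
    ((simpleAmalgamationToProd f J).codRestrict _ (simpleAmalgamationToProd_mem f J))
    ⟨fun _ _ h => simpleAmalgamationToProd_injective f J (congrArg Subtype.val h),
      fun w => (exists_simpleAmalgamationToProd_eq f J w.2).imp fun _ h => Subtype.ext h⟩

end Amalgamation

theorem statement19 {A B : Type*} [CommRing A] [CommRing B] (f : A →+* B) (J : Ideal B) :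
    ∃ e : ↥(amalgamation (RingHom.id ↥(amalgamation f J)) (zeroTimesJ f J)) ≃+*
        ↥(amalgamation (f.prod f) (J.prod J)),
      ∀ z : amalgamation (RingHom.id ↥(amalgamation f J)) (zeroTimesJ f J),
        ((e z : A × (B × B))) =
          (z.val.1.val.1, (z.val.1.val.2, z.val.2.val.2)) :=
  ⟨simpleAmalgamationEquiv f J, fun _ => rfl⟩
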